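/- arXiv:1309.5521 — 6 statements merged into one kernel-verified Lean document; each statement's English description precedes it below -/
import Mathlib

section
/- For every integer p ≥ 1, T_p = (−1)^p · [ 2·Σ_{m=1}^{⌊p/2⌋} binom(2p−2m−1, p−1)·ζ(2m) − binom(2p−1, p−1) ], where ζ denotes the Riemann zeta function. -/
open Real

/-- `T p = Σ_{n=1}^∞ 1/(n^p (n+1)^p)`. -/
noncomputable def T (p : ℕ) : ℝ := ∑' n : ℕ, 1 / (((n : ℝ) + 1) ^ p * ((n : ℝ) + 2) ^ p)

/-!
If `x + y = 1` and `P_q` is the degree-`q` truncation of the binomial series of `(1 - y)^{-(q+1)}`,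
then `x^{q+1} P_q(y) + y^{q+1} P_q(x) = 1`. Dividing by `(xy)^p` with `p = q + 1` gives the partial
fraction decomposition `(xy)^{-p} = Σ_{k=1}^p C(2p-k-1, p-1) (x^{-k} + y^{-k})`, which for
`x = n + 2`, `y = -(n + 1)` splits the `n`-th term of `T p`. Summed over `n`, the exponent `k`
contributes `(1 + (-1)^k) ζ(k) - 1` (for `k = 1` the sum telescopes to `-1`), so the odd zeta
values cancel, and the constants add up to `C(2p-1, p-1)` by the hockey-stick identity.
-/

open Finset Filter Topology

section NegBinomial

variable {R : Type*} [CommRing R]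

def negBinomialPartialSum (q : ℕ) (y : R) : R :=
  ∑ j ∈ range (q + 1), ((q + j).choose j : R) * y ^ j

theorem one_sub_mul_negBinomialPartialSum_succ (q : ℕ) (y : R) :
    (1 - y) * negBinomialPartialSum (q + 1) y =
      negBinomialPartialSum q y + ((2 * q + 1).choose q : R) * y ^ (q + 1) * (1 - 2 * y) := by
  set a : ℕ → R := fun j => ((q + j).choose j : ℕ)
  set b : ℕ → R := fun j => ((q + 1 + j).choose j : ℕ)
  have hpascal : ∀ j, b (j + 1) = b j + a (j + 1) := fun j => by
    simp only [a, b, ← Nat.cast_add, ← Nat.choose_succ_succ', Nat.add_succ, Nat.succ_add]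
  have hX : negBinomialPartialSum (q + 1) y = ∑ j ∈ range (q + 2), b j * y ^ j := rfl
  have hlow : negBinomialPartialSum (q + 1) y =
      ∑ j ∈ range (q + 1), b j * y ^ j + b (q + 1) * y ^ (q + 1) := sum_range_succ _ _
  have hshift : negBinomialPartialSum (q + 1) y =
      1 + ∑ j ∈ range (q + 1), b j * y ^ (j + 1)
        + ∑ j ∈ range (q + 1), a (j + 1) * y ^ (j + 1) := by
    simp only [hX, sum_range_succ' _ (q + 1), hpascal, add_mul, sum_add_distrib, add_zero,
      Nat.choose_zero_right, Nat.cast_one, pow_zero, mul_one, b]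
    ring
  have hS : 1 + ∑ j ∈ range (q + 1), a (j + 1) * y ^ (j + 1) =
      negBinomialPartialSum q y + a (q + 1) * y ^ (q + 1) := by
    have hsucc : negBinomialPartialSum q y + a (q + 1) * y ^ (q + 1) =
        ∑ j ∈ range (q + 2), a j * y ^ j := (sum_range_succ _ _).symm
    rw [hsucc, sum_range_succ' _ (q + 1), add_comm]
    simp [a]
  have ha : a (q + 1) = (2 * q + 1).choose q := by
    simp only [a, show q + (q + 1) = 2 * q + 1 by ring, Nat.choose_symm_half]
  have hb : b (q + 1) = 2 * (2 * q + 1).choose q := by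
    simp only [b]
    rw [show q + 1 + (q + 1) = 2 * q + 1 + 1 by ring, Nat.choose_succ_succ', Nat.choose_symm_half]
    push_cast; ring
  have hB : ∑ j ∈ range (q + 1), b j * y ^ (j + 1) =
      y * ∑ j ∈ range (q + 1), b j * y ^ j := by
    rw [mul_sum]; exact sum_congr rfl fun j _ => by ring
  rw [ha] at hS
  rw [hb] at hlow
  linear_combination hshift - y * hlow + hB + hS

theorem pow_mul_negBinomialPartialSum_succ {x y : R} (h : x + y = 1) (q : ℕ) :
    x ^ (q + 2) * negBinomialPartialSum (q + 1) y =
      x ^ (q + 1) * negBinomialPartialSum q y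
        + ((2 * q + 1).choose q : R) * (x ^ (q + 1) * y ^ (q + 1)) * (x - y) := by
  obtain rfl : x = 1 - y := eq_sub_of_add_eq h
  rw [pow_succ, mul_assoc, one_sub_mul_negBinomialPartialSum_succ]
  ring

theorem pow_mul_negBinomialPartialSum_add {x y : R} (h : x + y = 1) (q : ℕ) :
    x ^ (q + 1) * negBinomialPartialSum q y + y ^ (q + 1) * negBinomialPartialSum q x = 1 := by
  induction q with
  | zero => simp [negBinomialPartialSum, h]
  | succ q ih =>
    rw [pow_mul_negBinomialPartialSum_succ h,
      pow_mul_negBinomialPartialSum_succ ((add_comm y x).trans h), ← ih]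
    ring

end NegBinomial

theorem sum_Icc_one_eq_sum_range_sub {M : Type*} [AddCommMonoid M] (f : ℕ → M) (p : ℕ) :
    ∑ k ∈ Icc 1 p, f k = ∑ j ∈ range p, f (p - j) := by
  rw [range_eq_Ico, sum_Ico_reflect _ _ p.le_succ, Nat.add_sub_cancel_left, Nat.sub_zero,
    Ico_add_one_right_eq_Icc]

theorem inv_mul_pow_eq_sum_choose {K : Type*} [Field K] {x y : K} (h : x + y = 1)
    (hx : x ≠ 0) (hy : y ≠ 0) {p : ℕ} (hp : 1 ≤ p) :
    ((x * y) ^ p)⁻¹ =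
      ∑ k ∈ Icc 1 p, ((2 * p - k - 1).choose (p - 1) : K) * ((x ^ k)⁻¹ + (y ^ k)⁻¹) := by
  obtain ⟨q, rfl⟩ : ∃ q, p = q + 1 := ⟨p - 1, by omega⟩
  rw [sum_Icc_one_eq_sum_range_sub, ← mul_one ((x * y) ^ (q + 1))⁻¹,
    ← pow_mul_negBinomialPartialSum_add h q, negBinomialPartialSum, negBinomialPartialSum,
    mul_add]
  simp only [mul_sum, ← sum_add_distrib]
  refine sum_congr rfl fun j hj => ?_
  have hj : j ≤ q := Nat.lt_succ_iff.mp (mem_range.mp hj)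
  obtain ⟨k, hk⟩ : ∃ k, q + 1 = k + j := ⟨q + 1 - j, by omega⟩
  rw [Nat.add_sub_cancel, show 2 * (q + 1) - (q + 1 - j) - 1 = q + j by omega,
    Nat.choose_symm_add, show q + 1 - j = k by omega, hk, mul_pow, pow_add, pow_add]
  field_simp
  ring

theorem inv_nat_add_one_pow_mul_nat_add_two_pow {p : ℕ} (hp : 1 ≤ p) (n : ℕ) :
    (((n : ℂ) + 1) ^ p * ((n : ℂ) + 2) ^ p)⁻¹ = (-1) ^ p *
      ∑ k ∈ Icc 1 p, ((2 * p - k - 1).choose (p - 1) : ℂ) *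
        ((((n : ℂ) + 2) ^ k)⁻¹ + ((-((n : ℂ) + 1)) ^ k)⁻¹) := by
  rw [← inv_mul_pow_eq_sum_choose (by ring) (by norm_cast) (neg_ne_zero.mpr (by norm_cast)) hp,
    mul_neg, neg_pow (_ * _), mul_inv ((-1 : ℂ) ^ p), ← mul_assoc, ← inv_pow (-1 : ℂ),
    inv_neg_one, ← mul_pow (-1 : ℂ), neg_one_mul, neg_neg, one_pow, one_mul, mul_comm, mul_pow]

theorem hasSum_sub_succ_of_antitone {f : ℕ → ℝ} (hf : Antitone f) {l : ℝ}
    (hl : Tendsto f atTop (𝓝 l)) :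
    HasSum (fun n => f n - f (n + 1)) (f 0 - l) := by
  rw [hasSum_iff_tendsto_nat_of_nonneg fun n => sub_nonneg.2 (hf n.le_succ)]
  simp_rw [sum_range_sub']
  exact tendsto_const_nhds.sub hl

theorem hasSum_inv_nat_add_one_pow {k : ℕ} (hk : 1 < k) :
    HasSum (fun n : ℕ => (((n : ℂ) + 1) ^ k)⁻¹) (riemannZeta k) := by
  have hk' : 1 < (k : ℂ).re := by simpa using hk
  have hs : Summable fun n : ℕ => (((n : ℂ) + 1) ^ k)⁻¹ := by
    simpa [Complex.cpow_natCast] using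
      (summable_nat_add_iff 1).mpr (Complex.summable_one_div_nat_cpow.mpr hk')
  simpa [zeta_eq_tsum_one_div_nat_add_one_cpow hk', Complex.cpow_natCast] using hs.hasSum

theorem hasSum_inv_add_two_pow_add_inv_neg_pow {k : ℕ} (hk : 1 ≤ k) :
    HasSum (fun n : ℕ => (((n : ℂ) + 2) ^ k)⁻¹ + ((-((n : ℂ) + 1)) ^ k)⁻¹)
      ((1 + (-1) ^ k) * riemannZeta k - 1) := by
  rcases hk.eq_or_lt with rfl | hk
  · have hanti : Antitone fun n : ℕ => 1 / ((n : ℝ) + 1) := fun m n hmn => by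
      dsimp only; gcongr
    have htel := hasSum_sub_succ_of_antitone hanti tendsto_one_div_add_atTop_nhds_zero_nat
    have hterm : ∀ n : ℕ, (((n : ℂ) + 2) ^ 1)⁻¹ + ((-((n : ℂ) + 1)) ^ 1)⁻¹ =
        -((1 / ((n : ℝ) + 1) - 1 / (((n + 1 : ℕ) : ℝ) + 1) : ℝ) : ℂ) := fun n => by
      simp only [pow_one, inv_neg, one_div]; push_cast; ring
    -- `riemannZeta 1` is a junk value, but its coefficient `1 + (-1) ^ 1` vanishes.
    rw [funext hterm, show (1 + (-1) ^ 1) * riemannZeta (1 : ℕ) - 1 =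
      -((1 / ((0 : ℕ) + 1) - 0 : ℝ) : ℂ) by simp]
    exact (Complex.hasSum_ofReal.mpr htel).neg
  · have hzeta := hasSum_inv_nat_add_one_pow hk
    have hshift := (hasSum_nat_add_iff' 1).mpr hzeta
    have hterm : ∀ n : ℕ, (((n : ℂ) + 2) ^ k)⁻¹ + ((-((n : ℂ) + 1)) ^ k)⁻¹ =
        ((((n + 1 : ℕ) : ℂ) + 1) ^ k)⁻¹ + (-1) ^ k * (((n : ℂ) + 1) ^ k)⁻¹ := by
      intro n
      rw [neg_pow, mul_inv, ← inv_pow (-1 : ℂ) k, inv_neg_one]; push_cast; ring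
    rw [funext hterm, show (1 + (-1) ^ k) * riemannZeta k - 1 =
        riemannZeta k - ∑ i ∈ range 1, (((i : ℂ) + 1) ^ k)⁻¹ + (-1) ^ k * riemannZeta k by
      simp; ring]
    exact hshift.add (hzeta.mul_left _)

theorem sum_Icc_one_add_neg_one_pow_mul {R : Type*} [Ring R] (f : ℕ → R) (n : ℕ) :
    ∑ k ∈ Icc 1 n, (1 + (-1) ^ k) * f k = 2 * ∑ m ∈ Icc 1 (n / 2), f (2 * m) := by
  have hodd : ∀ k ∈ Icc 1 n, ¬ Even k → (1 + (-1 : R) ^ k) * f k = 0 := fun k _ hk => by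
    rw [(Nat.not_even_iff_odd.mp hk).neg_one_pow, add_neg_cancel, zero_mul]
  have himage : (Icc 1 n).filter Even =
      (Icc 1 (n / 2)).map ⟨(2 * ·), mul_right_injective₀ two_ne_zero⟩ := by
    ext k
    simp only [mem_filter, mem_Icc, Finset.mem_map, Function.Embedding.coeFn_mk]
    constructor
    · rintro ⟨⟨h1, h2⟩, m, rfl⟩
      exact ⟨m, ⟨by omega, by omega⟩, by ring⟩
    · rintro ⟨m, ⟨h1, h2⟩, rfl⟩
      exact ⟨⟨by omega, by omega⟩, even_two_mul m⟩
  rw [← sum_filter_of_ne fun k hk h => by_contra fun he => h (hodd k hk he), himage, sum_map,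
    mul_sum]
  refine sum_congr rfl fun m _ => ?_
  simp [pow_mul, one_add_one_eq_two]

theorem sum_Icc_one_choose_two_mul_sub {p : ℕ} (hp : 1 ≤ p) :
    ∑ k ∈ Icc 1 p, (2 * p - k - 1).choose (p - 1) = (2 * p - 1).choose (p - 1) := by
  obtain ⟨q, rfl⟩ : ∃ q, p = q + 1 := ⟨p - 1, by omega⟩
  rw [sum_Icc_one_eq_sum_range_sub, Nat.add_sub_cancel,
    show 2 * (q + 1) - 1 = q + q + 1 by omega,
    Nat.choose_symm_of_eq_add (show q + q + 1 = q + (q + 1) by omega), ← Nat.sum_range_add_choose]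
  exact sum_congr rfl fun j hj => by rw [mem_range] at hj; congr 1; omega

theorem T_eq_zeta_combination (p : ℕ) (hp : 1 ≤ p) :
    (T p : ℂ) = (-1 : ℂ) ^ p *
      (2 * ∑ m ∈ Finset.Icc 1 (p / 2),
          (Nat.choose (2 * p - 2 * m - 1) (p - 1) : ℂ) * riemannZeta (2 * m)
        - (Nat.choose (2 * p - 1) (p - 1) : ℂ)) := by
  set c : ℕ → ℂ := fun k => ((2 * p - k - 1).choose (p - 1) : ℂ)
  have hterm : ∀ n : ℕ, ((1 / (((n : ℝ) + 1) ^ p * ((n : ℝ) + 2) ^ p) : ℝ) : ℂ) =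
      (-1) ^ p *
        ∑ k ∈ Icc 1 p, c k * ((((n : ℂ) + 2) ^ k)⁻¹ + ((-((n : ℂ) + 1)) ^ k)⁻¹) :=
    fun n => by push_cast [one_div]; exact inv_nat_add_one_pow_mul_nat_add_two_pow hp n
  have hsum := (hasSum_sum (s := Icc 1 p) fun k hk =>
    (hasSum_inv_add_two_pow_add_inv_neg_pow (mem_Icc.mp hk).1).mul_left (c k)).mul_left
      ((-1 : ℂ) ^ p)
  have hc : ∑ k ∈ Icc 1 p, c k = ((2 * p - 1).choose (p - 1) : ℂ) := by
    simp only [c]; exact_mod_cast sum_Icc_one_choose_two_mul_sub hp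
  rw [T, Complex.ofReal_tsum, tsum_congr hterm, hsum.tsum_eq]
  simp only [mul_sub, mul_one, sum_sub_distrib, mul_left_comm (c _),
    sum_Icc_one_add_neg_one_pow_mul, hc]
  push_cast
  rfl
end

section
/- For every integer N ≥ 0, set H_{2N+2} = −π²/8 + (1 + Σ_{k=0}^{2N} (−1)^k T_{k+1}/4^{k+1}). Then 0 < H_{2N+2} < T_{2N+2}/4^{2N+2}, and for every real x with −1 < x < 1: (8/π²)·[ 1/(1 − x²) + Σ_{k=0}^{2N+1} (−1)^k (T_{k+1}/4^{k+1})(1 − x²)^k ] ≤ tan(πx/2)/(πx/2) ≤ (8/π²)·[ 1/(1 − x²) + Σ_{k=0}^{2N} (−1)^k (T_{k+1}/4^{k+1})(1 − x²)^k − H_{2N+2}·(1 − x²)^{2N+1} ]. -/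
open Real

/-- `tan(πx/2)/(πx/2)`, understood to equal `1` at `x = 0`. -/
noncomputable def tanc (x : ℝ) : ℝ :=
  if x = 0 then 1 else Real.tan (π * x / 2) / (π * x / 2)

/-!
From the partial-fraction expansion of the cotangent and `tan θ = cot θ - 2 cot 2θ` one gets
`tanc x = (8/π²) Σₖ 1/((2k+1)² - x²)`. With `y = 1 - x²` and `dₘ = 4(m+1)(m+2) = (2m+3)² - 1`
this reads `tanc x = (8/π²) (1/y + Σₘ 1/(dₘ + y))`. Expanding `1/(dₘ + y)` as a finite
geometric series in `-y/dₘ` with exact remainder produces the coefficients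
`Σₘ dₘ^{-(k+1)} = T_{k+1}/4^{k+1}` and the remainder `(-y)^M Σₘ 1/(dₘ^M (dₘ + y))`, whose sign
is `(-1)^M` and whose sum decreases in `y`. At `x = 0`, where `tanc 0 = 1`, this identifies
`H_{2N+2}` with the remainder sum for `M = 2N + 1` at `y = 1`, which yields all the bounds.
-/

open Complex in
theorem Complex.pi_mul_tan_pi_mul_div_two_eq_tsum {x : ℂ} (hx : x ∈ integerComplement) :
    π * tan (π * x / 2) = -2 * ∑' k : ℕ, cotTerm x (2 * k) := by
  have hx2 : x / 2 ∈ integerComplement :=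
    fun ⟨n, hn⟩ => hx ⟨2 * n, by push_cast; rw [hn]; ring⟩
  have hsin : sin (π * x / 2) ≠ 0 := by
    simpa [mul_div_assoc] using sin_pi_mul_ne_zero hx2
  have hcos : cos (π * x / 2) ≠ 0 := by
    have h := sin_pi_mul_ne_zero hx
    rw [show (π : ℂ) * x = 2 * (π * x / 2) by ring, sin_two_mul] at h
    exact right_ne_zero_of_mul h
  have htan : π * tan (π * x / 2) = π * cot (π * (x / 2)) - 2 * (π * cot (π * x)) := by
    rw [show (π : ℂ) * (x / 2) = π * x / 2 by ring,
      show (π : ℂ) * x = 2 * (π * x / 2) by ring, tan_eq_sin_div_cos, cot_eq_cos_div_sin, cot_eq_cos_div_sin, sin_two_mul, cos_two_mul]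
    field_simp
    linear_combination sin_sq_add_cos_sq (π * x / 2)
  have hhalf : ∑' k : ℕ, cotTerm (x / 2) k = 2 * ∑' k : ℕ, cotTerm x (2 * k + 1) := by
    rw [← tsum_mul_left]
    congr 1 with k
    simp only [cotTerm]
    push_cast
    field_simp
    ring
  have hsplit := tsum_even_add_odd
    ((summable_cotTerm hx).comp_injective (mul_right_injective₀ two_ne_zero))
    ((summable_cotTerm hx).comp_injective
      ((add_left_injective 1).comp (mul_right_injective₀ two_ne_zero)))
  rw [htan, ← sub_add_cancel (π * cot (π * (x / 2))) (1 / (x / 2)), cot_series_rep' hx2, hhalf,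
    ← sub_add_cancel (π * cot (π * x)) (1 / x), cot_series_rep' hx, ← hsplit]
  field_simp
  ring

theorem Real.pi_mul_tan_pi_mul_div_two_eq_tsum {x : ℝ} (hx : ∀ n : ℤ, x ≠ n) :
    π * tan (π * x / 2) = ∑' k : ℕ, 4 * x / ((2 * k + 1) ^ 2 - x ^ 2) := by
  have hxC : (x : ℂ) ∈ Complex.integerComplement :=
    fun ⟨n, hn⟩ => hx n (by exact_mod_cast hn.symm)
  apply Complex.ofReal_injective
  push_cast
  rw [Complex.pi_mul_tan_pi_mul_div_two_eq_tsum hxC, ← tsum_mul_left]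
  congr 1 with k
  have hk :=
    sub_ne_zero.mpr (Complex.integerComplement_pow_two_ne_pow_two hxC (2 * k + 1)).symm
  rw [cotTerm_identity hxC]
  push_cast at hk ⊢
  rw [show ((x : ℂ) + (2 * k + 1)) * (x - (2 * k + 1)) = -((2 * k + 1) ^ 2 - x ^ 2) by ring]
  field_simp
  ring

theorem hasSum_one_div_odd_sq :
    HasSum (fun k : ℕ => 1 / (2 * (k : ℝ) + 1) ^ 2) (π ^ 2 / 8) := by
  set f : ℕ → ℝ := fun n => 1 / (n : ℝ) ^ 2
  have heven : HasSum (fun k => f (2 * k)) (π ^ 2 / 24) := by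
    have hf : (fun k => f (2 * k)) = fun k => 1 / 4 * f k := by
      ext k
      simp only [f]
      push_cast
      ring
    rw [hf, show π ^ 2 / 24 = 1 / 4 * (π ^ 2 / 6) by ring]
    exact hasSum_zeta_two.mul_left _
  have hodd : Summable fun k => f (2 * k + 1) :=
    hasSum_zeta_two.summable.comp_injective
      ((add_left_injective 1).comp (mul_right_injective₀ two_ne_zero))
  have htotal := hasSum_zeta_two.unique (heven.even_add_odd hodd.hasSum)
  convert hodd.hasSum using 1
  · simp [f]
  · linarith

theorem tanc_eq_tsum {x : ℝ} (hx : x ^ 2 < 1) :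
    tanc x = 8 / π ^ 2 * ∑' k : ℕ, 1 / ((2 * k + 1) ^ 2 - x ^ 2) := by
  rcases eq_or_ne x 0 with rfl | hx0
  · simp only [tanc, if_pos, ne_eq, two_ne_zero, not_false_eq_true, zero_pow, sub_zero,
      hasSum_one_div_odd_sq.tsum_eq]
    field_simp
  · have hxZ : ∀ n : ℤ, x ≠ n := by
      rintro n rfl
      have hn : n ^ 2 < 1 := by exact_mod_cast hx
      exact hx0 (by simpa using Int.abs_lt_one_iff.mp ((sq_lt_one_iff_abs_lt_one n).mp hn))
    have htan := Real.pi_mul_tan_pi_mul_div_two_eq_tsum hxZ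
    simp_rw [← mul_one_div (4 * x)] at htan
    rw [tsum_mul_left, mul_comm, ← eq_div_iff pi_ne_zero] at htan
    rw [tanc, if_neg hx0, htan]
    field_simp
    ring

lemma one_div_add_eq_sum_add (M : ℕ) {a y : ℝ} (ha : a ≠ 0) (hay : a + y ≠ 0) :
    1 / (a + y) = ∑ k ∈ Finset.range M, (-1) ^ k * (1 / a ^ (k + 1)) * y ^ k +
      (-1) ^ M * y ^ M * (1 / (a ^ M * (a + y))) := by
  induction M with
  | zero => simp
  | succ M ih =>
    rw [Finset.sum_range_succ, ih]
    field_simp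
    ring

namespace TanBounds

/-- `(2m + 3)² - x² = denom m + (1 - x²)`. -/
noncomputable def denom (m : ℕ) : ℝ := 4 * ((m : ℝ) + 1) * ((m : ℝ) + 2)

lemma one_le_denom (m : ℕ) : 1 ≤ denom m := by
  unfold denom
  nlinarith [(m.cast_nonneg : (0 : ℝ) ≤ m)]

lemma denom_pos (m : ℕ) : 0 < denom m := one_pos.trans_le (one_le_denom m)

lemma summable_of_le_one_div_denom {f : ℕ → ℝ} (h0 : ∀ m, 0 ≤ f m)
    (h : ∀ m, f m ≤ 1 / denom m) : Summable f := by
  have hsq : Summable fun m : ℕ => 1 / ((m : ℝ) + 1) ^ 2 := by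
    simpa using (summable_nat_add_iff 1).mpr (Real.summable_one_div_nat_pow.mpr one_lt_two)
  refine hsq.of_nonneg_of_le h0 fun m => (h m).trans ?_
  gcongr
  unfold denom
  nlinarith [(m.cast_nonneg : (0 : ℝ) ≤ m)]

lemma one_div_denom_pow_le (k : ℕ) (m : ℕ) : 1 / denom m ^ (k + 1) ≤ 1 / denom m := by
  have := denom_pos m
  gcongr
  exact le_self_pow₀ (one_le_denom m) k.succ_ne_zero

lemma hasSum_one_div_denom_pow (k : ℕ) :
    HasSum (fun m => 1 / denom m ^ (k + 1)) (T (k + 1) / 4 ^ (k + 1)) := by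
  have hs : Summable fun m => 1 / denom m ^ (k + 1) :=
    summable_of_le_one_div_denom (fun m => by have := denom_pos m; positivity)
      (one_div_denom_pow_le k)
  convert hs.hasSum using 1
  rw [T, div_eq_iff (by positivity), ← tsum_mul_right]
  congr 1 with m
  simp only [denom, mul_pow]
  field_simp

/-- Up to the factor `(-y)^M`, the remainder of the `M`-term expansion of `Σ 1/(denom m + y)`
in powers of `y`. -/
noncomputable def rem (M : ℕ) (y : ℝ) : ℝ := ∑' m, 1 / (denom m ^ M * (denom m + y))

variable {M : ℕ} {y : ℝ}

lemma one_div_denom_pow_mul_le (hy : 0 ≤ y) (m : ℕ) :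
    1 / (denom m ^ M * (denom m + y)) ≤ 1 / denom m := by
  have := denom_pos m
  gcongr
  calc denom m = 1 * denom m := (one_mul _).symm
    _ ≤ denom m ^ M * (denom m + y) := by
      gcongr
      · exact one_le_pow₀ (one_le_denom m)
      · linarith

lemma summable_one_div_denom_pow_mul (hy : 0 ≤ y) :
    Summable fun m => 1 / (denom m ^ M * (denom m + y)) :=
  summable_of_le_one_div_denom (fun m => by have := denom_pos m; positivity)
    (one_div_denom_pow_mul_le hy)

lemma rem_pos (hy : 0 ≤ y) : 0 < rem M y :=
  (summable_one_div_denom_pow_mul hy).tsum_pos (fun m => by have := denom_pos m; positivity) 0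
    (by have := denom_pos 0; positivity)

lemma rem_antitone (hy : 0 ≤ y) {z : ℝ} (hyz : y ≤ z) : rem M z ≤ rem M y := by
  refine (summable_one_div_denom_pow_mul (hy.trans hyz)).tsum_le_tsum (fun m => ?_)
    (summable_one_div_denom_pow_mul hy)
  have := denom_pos m
  gcongr

lemma rem_lt (hy : 0 < y) : rem M y < T (M + 1) / 4 ^ (M + 1) := by
  have hT := hasSum_one_div_denom_pow M
  rw [← hT.tsum_eq]
  have hlt (m : ℕ) : 1 / (denom m ^ M * (denom m + y)) < 1 / denom m ^ (M + 1) := by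
    have := denom_pos m
    rw [pow_succ]
    gcongr
    linarith
  exact (summable_one_div_denom_pow_mul hy.le).tsum_lt_tsum (fun m => (hlt m).le) (hlt 0)
    hT.summable

lemma tsum_one_div_denom_add (M : ℕ) (hy : 0 ≤ y) :
    ∑' m, 1 / (denom m + y) =
      ∑ k ∈ Finset.range M, (-1) ^ k * (T (k + 1) / 4 ^ (k + 1)) * y ^ k +
        (-1) ^ M * y ^ M * rem M y := by
  have hsum := (hasSum_sum (s := Finset.range M) fun k _ =>
    ((hasSum_one_div_denom_pow k).mul_left ((-1) ^ k)).mul_right (y ^ k)).add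
    ((summable_one_div_denom_pow_mul (M := M) hy).hasSum.mul_left ((-1) ^ M * y ^ M))
  rw [rem, ← hsum.tsum_eq]
  refine tsum_congr fun m => ?_
  have := denom_pos m
  exact one_div_add_eq_sum_add M this.ne' (by positivity)

theorem tanc_eq_of_sq_lt_one {x : ℝ} (hx : x ^ 2 < 1) :
    tanc x = 8 / π ^ 2 * (1 / (1 - x ^ 2) + ∑' m, 1 / (denom m + (1 - x ^ 2))) := by
  have hshift (m : ℕ) : (2 * ((m + 1 : ℕ) : ℝ) + 1) ^ 2 - x ^ 2 = denom m + (1 - x ^ 2) := by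
    push_cast
    unfold denom
    ring
  have hy : 0 ≤ 1 - x ^ 2 := by linarith
  rw [tanc_eq_tsum hx, tsum_eq_zero_add']
  · simp only [hshift, Nat.cast_zero, mul_zero, zero_add, one_pow]
  · simp only [hshift]
    exact summable_of_le_one_div_denom (fun m => by have := denom_pos m; positivity)
      fun m => by have := denom_pos m; gcongr; linarith

end TanBounds

theorem tan_bounds_odd (N : ℕ) (H : ℝ)
    (hH : H = -(π ^ 2) / 8 +
      (1 + ∑ k ∈ Finset.range (2 * N + 1), (-1 : ℝ) ^ k * (T (k + 1) / 4 ^ (k + 1)))) :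
    0 < H ∧ H < T (2 * N + 2) / 4 ^ (2 * N + 2) ∧
    ∀ x : ℝ, -1 < x → x < 1 →
      8 / π ^ 2 * (1 / (1 - x ^ 2) +
          ∑ k ∈ Finset.range (2 * N + 2),
            (-1 : ℝ) ^ k * (T (k + 1) / 4 ^ (k + 1)) * (1 - x ^ 2) ^ k) ≤ tanc x ∧
      tanc x ≤ 8 / π ^ 2 * (1 / (1 - x ^ 2) +
          (∑ k ∈ Finset.range (2 * N + 1),
            (-1 : ℝ) ^ k * (T (k + 1) / 4 ^ (k + 1)) * (1 - x ^ 2) ^ k) -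
          H * (1 - x ^ 2) ^ (2 * N + 1)) := by
  have hodd : (-1 : ℝ) ^ (2 * N + 1) = -1 := Odd.neg_one_pow ⟨N, rfl⟩
  have hH_eq : H = TanBounds.rem (2 * N + 1) 1 := by
    have h0 := TanBounds.tanc_eq_of_sq_lt_one (x := 0) (by norm_num)
    rw [show (1 : ℝ) - 0 ^ 2 = 1 by norm_num,
      TanBounds.tsum_one_div_denom_add (2 * N + 1) zero_le_one, hodd, tanc, if_pos rfl] at h0
    have hpi := eq_one_div_of_mul_eq_one_right h0.symm
    simp only [one_div_div, one_pow, mul_one, div_one] at hpi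
    linarith
  refine ⟨hH_eq ▸ TanBounds.rem_pos zero_le_one, hH_eq ▸ TanBounds.rem_lt one_pos,
    fun x hx₁ hx₂ => ?_⟩
  have hy : 0 < 1 - x ^ 2 := by nlinarith
  rw [TanBounds.tanc_eq_of_sq_lt_one (by linarith)]
  constructor
  · rw [TanBounds.tsum_one_div_denom_add (2 * N + 2) hy.le,
      Even.neg_one_pow ⟨N + 1, by ring⟩, one_mul]
    have hrem := TanBounds.rem_pos (M := 2 * N + 2) hy.le
    gcongr
    linarith [mul_nonneg (pow_nonneg hy.le (2 * N + 2)) hrem.le]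
  · rw [TanBounds.tsum_one_div_denom_add (2 * N + 1) hy.le, hodd, hH_eq]
    have hrem := TanBounds.rem_antitone (M := 2 * N + 1) hy.le (by nlinarith : 1 - x ^ 2 ≤ 1)
    gcongr
    linarith [mul_le_mul_of_nonneg_left hrem (pow_nonneg hy.le (2 * N + 1))]
end

section
/- Let x and y be elements of a commutative ring satisfying x·y = x + y. Then for all integers m ≥ 1 and k ≥ 1: x^m · y^k = Σ_{j=1}^m binom(m+k−j−1, k−1)·x^j + Σ_{j=1}^k binom(m+k−j−1, m−1)·y^j. -/
/-!
Multiplying by `x * y = x + y` gives the Pascal recursion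
`x ^ (m + 2) * y ^ (k + 2) = x ^ (m + 2) * y ^ (k + 1) + x ^ (m + 1) * y ^ (k + 2)`, which the
sums `∑_{i + j = m} C(i + k, k) x ^ (j + 1)` also satisfy by Pascal's rule. The two sides
therefore agree once they agree on the boundary, where
`x ^ (m + 1) * y = y + x + x ^ 2 + ⋯ + x ^ (m + 1)`.
-/

open Finset

section binomPowSum

variable {R : Type*} [CommSemiring R]

/-- The `x`-part of `x ^ (m + 1) * y ^ (k + 1)` when `x * y = x + y`. -/
def binomPowSum (x : R) (m k : ℕ) : R :=
  ∑ p ∈ antidiagonal m, ((p.1 + k).choose k : R) * x ^ (p.2 + 1)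

theorem binomPowSum_zero_left (x : R) (k : ℕ) : binomPowSum x 0 k = x := by
  simp [binomPowSum]

theorem binomPowSum_zero_right (x : R) (m : ℕ) :
    binomPowSum x m 0 = ∑ j ∈ range (m + 1), x ^ (j + 1) := by
  simp only [binomPowSum, add_zero, Nat.choose_zero_right, Nat.cast_one, one_mul]
  rw [← Nat.sum_antidiagonal_swap]
  exact Nat.sum_antidiagonal_eq_sum_range_succ (fun i _ => x ^ (i + 1)) m

theorem binomPowSum_succ_succ (x : R) (m k : ℕ) :
    binomPowSum x (m + 1) (k + 1) = binomPowSum x (m + 1) k + binomPowSum x m (k + 1) := by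
  simp only [binomPowSum, Nat.sum_antidiagonal_succ, Nat.choose_self, Nat.cast_one, one_mul,
    zero_add]
  rw [add_assoc (G := R), ← sum_add_distrib]
  congr 1
  refine sum_congr rfl fun p _ => ?_
  rw [show p.1 + 1 + (k + 1) = p.1 + k + 1 + 1 by ring, Nat.choose_succ_succ', Nat.cast_add,
    add_mul, show p.1 + 1 + k = p.1 + k + 1 by ring, ← add_assoc]

theorem binomPowSum_eq_sum_Icc (x : R) (m k : ℕ) :
    binomPowSum x m k = ∑ j ∈ Icc 1 (m + 1), ((m + k + 1 - j).choose k : R) * x ^ j := by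
  refine sum_nbij' (fun p => p.2 + 1) (fun j => (m + 1 - j, j - 1)) ?_ ?_ ?_ ?_ ?_
  all_goals
    intro p hp
    simp only [HasAntidiagonal.mem_antidiagonal, mem_Icc] at hp ⊢
  · omega
  · omega
  · ext <;> simp only <;> omega
  · omega
  · rw [show m + k + 1 - (p.2 + 1) = p.1 + k by omega]

end binomPowSum

theorem pow_succ_mul_eq_add_sum_of_mul_eq_add {R : Type*} [Semiring R] {x y : R}
    (h : x * y = x + y) (m : ℕ) :
    x ^ (m + 1) * y = y + ∑ j ∈ range (m + 1), x ^ (j + 1) := by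
  induction m with
  | zero => rw [zero_add, pow_one, h, sum_range_one, zero_add, pow_one, add_comm]
  | succ m ih =>
    rw [pow_succ', mul_assoc, ih, mul_add, h, mul_sum, sum_range_succ' _ (m + 1)]
    simp only [← pow_succ', zero_add, pow_one]
    abel

theorem pow_succ_mul_pow_succ_eq_binomPowSum {R : Type*} [CommSemiring R] {x y : R}
    (h : x * y = x + y) (m k : ℕ) :
    x ^ (m + 1) * y ^ (k + 1) = binomPowSum x m k + binomPowSum y k m := by
  induction m generalizing k with
  | zero =>
    rw [binomPowSum_zero_left, binomPowSum_zero_right, zero_add, pow_one, mul_comm,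
      pow_succ_mul_eq_add_sum_of_mul_eq_add (by rw [mul_comm, h, add_comm])]
  | succ m ihm =>
    induction k with
    | zero =>
      rw [binomPowSum_zero_left, binomPowSum_zero_right, zero_add, pow_one,
        pow_succ_mul_eq_add_sum_of_mul_eq_add h, add_comm]
    | succ k ihk =>
      have pascal : x ^ (m + 2) * y ^ (k + 2)
          = x ^ (m + 2) * y ^ (k + 1) + x ^ (m + 1) * y ^ (k + 2) := by
        rw [show x ^ (m + 2) * y ^ (k + 2) = x ^ (m + 1) * (x * y) * y ^ (k + 1) by ring, h]
        ring
      rw [pascal, ihk, ihm, binomPowSum_succ_succ, binomPowSum_succ_succ]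
      abel

theorem xm_yk_identity {R : Type*} [CommRing R] (x y : R) (h : x * y = x + y)
    (m k : ℕ) (hm : 1 ≤ m) (hk : 1 ≤ k) :
    x ^ m * y ^ k =
      (∑ j ∈ Finset.Icc 1 m, (Nat.choose (m + k - j - 1) (k - 1) : R) * x ^ j) +
      ∑ j ∈ Finset.Icc 1 k, (Nat.choose (m + k - j - 1) (m - 1) : R) * y ^ j := by
  obtain ⟨m, rfl⟩ := Nat.exists_eq_add_of_le' hm
  obtain ⟨k, rfl⟩ := Nat.exists_eq_add_of_le' hk
  rw [pow_succ_mul_pow_succ_eq_binomPowSum h, binomPowSum_eq_sum_Icc, binomPowSum_eq_sum_Icc]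
  congr 1 <;> refine sum_congr rfl fun j _ => ?_ <;> congr 3 <;> omega
end

section
/- The alternating series Σ_{k=0}^∞ (−1)^k T_{k+1}/4^{k+1} converges and π²/8 = 1 + Σ_{k=0}^∞ (−1)^k T_{k+1}/4^{k+1}. -/
open Real

private noncomputable def rr (n : ℕ) : ℝ := (4 * ((n : ℝ) + 1) * ((n : ℝ) + 2))⁻¹

private lemma rr_pos (n : ℕ) : 0 < rr n := by
  have : (0:ℝ) < 4 * ((n : ℝ) + 1) * ((n : ℝ) + 2) := by positivity
  exact inv_pos.2 this

private lemma rr_le (n : ℕ) : rr n ≤ 1 / 8 := by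
  rw [rr, one_div]
  apply inv_anti₀ (by norm_num)
  nlinarith [Nat.cast_nonneg (α := ℝ) n]

private lemma sq_summable : Summable (fun n : ℕ => 1 / ((n : ℝ) + 1) ^ 2) := by
  have h := (summable_nat_add_iff 1).mpr
    (Real.summable_one_div_nat_pow.mpr (by norm_num : 1 < 2))
  exact h.congr fun n => by push_cast; ring

private lemma rr_summable : Summable rr := by
  refine Summable.of_nonneg_of_le (fun n => (rr_pos n).le) (fun n => ?_) sq_summable
  rw [rr, one_div]
  apply inv_anti₀ (by positivity)
  nlinarith [Nat.cast_nonneg (α := ℝ) n]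

private lemma T_hasSum (p : ℕ) (hp : 0 < p) :
    HasSum (fun n : ℕ => 1 / (((n : ℝ) + 1) ^ p * ((n : ℝ) + 2) ^ p)) (T p) := by
  have hs : Summable (fun n : ℕ => 1 / (((n : ℝ) + 1) ^ p * ((n : ℝ) + 2) ^ p)) := by
    refine Summable.of_nonneg_of_le (fun n => by positivity) (fun n => ?_) sq_summable
    have h1 : ((n : ℝ) + 1) ^ 2 ≤ ((n : ℝ) + 1) ^ p * ((n : ℝ) + 2) ^ p := by
      have e1 : ((n : ℝ) + 1) ≤ ((n : ℝ) + 1) ^ p :=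
        le_self_pow₀ (by nlinarith [Nat.cast_nonneg (α := ℝ) n]) hp.ne'
      have e2 : ((n : ℝ) + 1) ≤ ((n : ℝ) + 2) ^ p := by
        refine le_trans (by linarith) (le_self_pow₀ (by nlinarith [Nat.cast_nonneg (α := ℝ) n]) hp.ne')
      nlinarith [Nat.cast_nonneg (α := ℝ) n]
    exact div_le_div_of_nonneg_left (by norm_num) (by positivity) h1
  exact hs.hasSum

/-- The double-indexed family. -/
private noncomputable def F : ℕ × ℕ → ℝ := fun p => (-1 : ℝ) ^ p.1 * (rr p.2) ^ (p.1 + 1)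

private lemma F_fiber_n (n : ℕ) :
    HasSum (fun k : ℕ => F (k, n)) (1 / (2 * (n : ℝ) + 3) ^ 2) := by
  set r := rr n with hrdef
  have hr0 : 0 < r := rr_pos n
  have hr1 : r ≤ 1 / 8 := rr_le n
  have hnorm : ‖(-r)‖ < 1 := by
    rw [norm_neg, Real.norm_eq_abs, abs_of_pos hr0]; linarith
  have h := (hasSum_geometric_of_norm_lt_one hnorm).mul_left (-r)
  have h2 := h.neg
  have heq : ∀ k : ℕ, F (k, n) = -((-r) * (-r) ^ k) := by
    intro k
    show (-1 : ℝ) ^ k * (rr n) ^ (k + 1) = -((-r) * (-r) ^ k)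
    rw [← hrdef, neg_pow]
    ring
  have hsum : -((-r) * (1 - (-r))⁻¹) = 1 / (2 * (n : ℝ) + 3) ^ 2 := by
    have h4 : (4 * ((n : ℝ) + 1) * ((n : ℝ) + 2)) ≠ 0 := by positivity
    rw [hrdef, rr]
    rw [sub_neg_eq_add]
    have hne : (1 : ℝ) + (4 * ((n : ℝ) + 1) * ((n : ℝ) + 2))⁻¹ ≠ 0 := by
      have := rr_pos n
      rw [rr] at this
      positivity
    field_simp
    ring
  rw [← hsum]
  exact h2.congr_fun heq

private lemma F_fiber_k (k : ℕ) :
    HasSum (fun n : ℕ => F (k, n)) ((-1 : ℝ) ^ k * (T (k + 1) / 4 ^ (k + 1))) := by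
  have h := (T_hasSum (k + 1) k.succ_pos).mul_left ((-1 : ℝ) ^ k * ((4 : ℝ)⁻¹) ^ (k + 1))
  have heq : ∀ n : ℕ, F (k, n) = (-1 : ℝ) ^ k * ((4 : ℝ)⁻¹) ^ (k + 1) *
      (1 / (((n : ℝ) + 1) ^ (k + 1) * ((n : ℝ) + 2) ^ (k + 1))) := by
    intro n
    show (-1 : ℝ) ^ k * (rr n) ^ (k + 1) = _
    rw [rr]
    simp only [mul_inv, mul_pow, inv_pow, one_div]
    ring
  have hsum : (-1 : ℝ) ^ k * ((4 : ℝ)⁻¹) ^ (k + 1) * T (k + 1)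
      = (-1 : ℝ) ^ k * (T (k + 1) / 4 ^ (k + 1)) := by
    rw [inv_pow]; ring
  rw [← hsum]
  exact h.congr_fun heq

private lemma F_summable : Summable F := by
  rw [← summable_abs_iff]
  have habs : ∀ p : ℕ × ℕ, |F p| = (rr p.2) ^ (p.1 + 1) := by
    intro p
    rw [F, abs_mul, abs_pow, abs_neg, abs_one, one_pow, one_mul,
      abs_pow, abs_of_pos (rr_pos p.2)]
  have key : Summable (fun q : ℕ × ℕ => (rr q.1) ^ (q.2 + 1)) := by
    rw [summable_prod_of_nonneg (fun q => pow_nonneg (rr_pos q.1).le _)]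
    constructor
    · intro n
      have hn : ‖rr n‖ < 1 := by
        rw [Real.norm_eq_abs, abs_of_pos (rr_pos n)]; linarith [rr_le n]
      exact ((hasSum_geometric_of_norm_lt_one hn).mul_left (rr n)).summable.congr
        fun k => by rw [← pow_succ']
    · have hts : ∀ n : ℕ, ∑' k : ℕ, (rr n) ^ (k + 1) = rr n * (1 - rr n)⁻¹ := by
        intro n
        have hn : ‖rr n‖ < 1 := by
          rw [Real.norm_eq_abs, abs_of_pos (rr_pos n)]; linarith [rr_le n]
        have := ((hasSum_geometric_of_norm_lt_one hn).mul_left (rr n)).tsum_eq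
        rw [← this]
        exact tsum_congr fun k => by rw [← pow_succ']
      refine Summable.of_nonneg_of_le (fun n => ?_) (fun n => ?_)
        (rr_summable.mul_left 2)
      · rw [hts n]
        have h0 := rr_pos n; have h1 := rr_le n
        exact mul_nonneg h0.le (inv_nonneg.2 (by linarith))
      · rw [hts n]
        have h0 := rr_pos n; have h1 := rr_le n
        have hinv : (1 - rr n)⁻¹ ≤ 2 := by
          rw [inv_le_comm₀ (by linarith) (by norm_num)]
          linarith
        calc rr n * (1 - rr n)⁻¹ ≤ rr n * 2 := by nlinarith
          _ = 2 * rr n := by ring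
  have key2 : Summable (fun q : ℕ × ℕ => |F (q.2, q.1)|) :=
    key.congr fun q => (habs (q.2, q.1)).symm
  exact (Equiv.prodComm ℕ ℕ).summable_iff.mp key2

private lemma odd_hasSum :
    HasSum (fun n : ℕ => 1 / (2 * (n : ℝ) + 1) ^ 2) (π ^ 2 / 8) := by
  have htot := hasSum_zeta_two
  have heven : HasSum (fun n : ℕ => (1 : ℝ) / ((2 * n : ℕ) : ℝ) ^ 2) (π ^ 2 / 24) := by
    have h := htot.mul_left (1 / 4)
    have he : (1 : ℝ) / 4 * (π ^ 2 / 6) = π ^ 2 / 24 := by ring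
    rw [he] at h
    refine h.congr_fun fun n => ?_
    rcases eq_or_ne n 0 with h0 | h0
    · simp [h0]
    · push_cast
      rw [mul_pow, div_mul_div_comm]
      norm_num
  have hodd_summable : Summable (fun n : ℕ => (1 : ℝ) / ((2 * n + 1 : ℕ) : ℝ) ^ 2) := by
    refine Summable.of_nonneg_of_le (fun n => by positivity) (fun n => ?_) sq_summable
    apply div_le_div_of_nonneg_left (by norm_num) (by positivity)
    push_cast
    nlinarith [Nat.cast_nonneg (α := ℝ) n]
  obtain ⟨s, hs⟩ := hodd_summable
  have hcomb := HasSum.even_add_odd (f := fun m : ℕ => (1 : ℝ) / (m : ℝ) ^ 2) heven hs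
  have : π ^ 2 / 24 + s = π ^ 2 / 6 := hcomb.unique htot
  have hs' : s = π ^ 2 / 8 := by linarith
  rw [hs'] at hs
  exact hs.congr_fun fun n => by push_cast; ring_nf

private lemma odd_hasSum' :
    HasSum (fun n : ℕ => 1 / (2 * (n : ℝ) + 3) ^ 2) (π ^ 2 / 8 - 1) := by
  have h := odd_hasSum
  have h2 := (hasSum_nat_add_iff' (f := fun n : ℕ => 1 / (2 * (n : ℝ) + 1) ^ 2)
    (g := π ^ 2 / 8) 1).mpr h
  have hsum : ∑ i ∈ Finset.range 1, (1 : ℝ) / (2 * (i : ℝ) + 1) ^ 2 = 1 := by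
    simp
  rw [hsum] at h2
  exact h2.congr_fun fun n => by push_cast; ring_nf

theorem T_alternating_sum :
    HasSum (fun k : ℕ => (-1 : ℝ) ^ k * (T (k + 1) / 4 ^ (k + 1))) (π ^ 2 / 8 - 1) := by
  have hF := F_summable.hasSum
  have hmain : HasSum (fun k : ℕ => (-1 : ℝ) ^ k * (T (k + 1) / 4 ^ (k + 1))) (∑' p, F p) :=
    hF.prod_fiberwise F_fiber_k
  have hF' : HasSum (fun q : ℕ × ℕ => F (q.2, q.1)) (∑' p, F p) := by
    exact (Equiv.prodComm ℕ ℕ).hasSum_iff.mpr hF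
  have hn : HasSum (fun n : ℕ => 1 / (2 * (n : ℝ) + 3) ^ 2) (∑' p, F p) :=
    hF'.prod_fiberwise fun n => F_fiber_n n
  have : (∑' p, F p) = π ^ 2 / 8 - 1 := hn.unique odd_hasSum'
  rwa [this] at hmain
end

section
/- For every real x with −1 < x < 1: 1/(1 − x²) ≤ sec(πx/2) ≤ (4/π)/(1 − x²), where sec denotes the secant function 1/cos. -/
/-!
Both bounds reduce, by evenness, to `0 ≤ x ≤ 1`, where (after taking reciprocals) they read
`π / 4 * (1 - x²) ≤ cos (π x / 2) ≤ 1 - x²`.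
For the lower bound write `cos (π x / 2) = sin s` with `s = π (1 - x) / 2`; then
`sin s ≥ s - s³ / 6`, and the difference from `π / 4 * (1 - x²)` factors as
`π (1 - x)² (12 - π² (1 - x)) / 48 ≥ 0`.
For the upper bound write `cos (π x / 2) = 1 - 2 sin² (π x / 4)`; concavity of `sin` on `[0, π]`
puts `sin (π x / 4)` above the chord `x sin (π / 4) = x / √2`.
-/

open Real

namespace Real

lemma mul_sin_le_sin_mul {a t : ℝ} (ha₀ : 0 ≤ a) (haπ : a ≤ π) (ht₀ : 0 ≤ t) (ht₁ : t ≤ 1) :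
    t * sin a ≤ sin (t * a) := by
  simpa using strictConcaveOn_sin_Icc.concaveOn.2 ⟨le_rfl, pi_pos.le⟩ ⟨ha₀, haπ⟩
    (sub_nonneg.2 ht₁) ht₀

lemma cos_pi_mul_abs_div_two (x : ℝ) : cos (π * |x| / 2) = cos (π * x / 2) := by
  rw [← cos_abs (π * x / 2), abs_div, abs_mul, abs_of_pos pi_pos, abs_two]

lemma pi_div_four_mul_one_sub_sq_le_cos_pi_mul_div_two {x : ℝ} (hx₀ : 0 ≤ x) (hx₁ : x ≤ 1) :
    π / 4 * (1 - x ^ 2) ≤ cos (π * x / 2) := by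
  have hcos : cos (π * x / 2) = sin (π * (1 - x) / 2) := by
    rw [← cos_pi_div_two_sub]; ring_nf
  have hπsq : π ^ 2 * (1 - x) ≤ 12 := by nlinarith [pi_lt_d2, pi_pos]
  have hfactor : 0 ≤ π * (1 - x) ^ 2 * (12 - π ^ 2 * (1 - x)) :=
    mul_nonneg (by positivity) (sub_nonneg.2 hπsq)
  rw [hcos]
  nlinarith [sin_ge_sub_cube (x := π * (1 - x) / 2)
    (div_nonneg (mul_nonneg pi_pos.le (sub_nonneg.2 hx₁)) zero_le_two)]

lemma cos_pi_mul_div_two_le_one_sub_sq {x : ℝ} (hx₀ : 0 ≤ x) (hx₁ : x ≤ 1) :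
    cos (π * x / 2) ≤ 1 - x ^ 2 := by
  have hchord : x * (√2 / 2) ≤ sin (x * (π / 4)) := by
    simpa [sin_pi_div_four] using
      mul_sin_le_sin_mul (a := π / 4) (by positivity) (by linarith [pi_pos]) hx₀ hx₁
  have hcos : cos (π * x / 2) = 1 - 2 * sin (x * (π / 4)) ^ 2 := by
    rw [← cos_two_mul_eq_one_sub]; ring_nf
  have hsq : x ^ 2 / 2 ≤ sin (x * (π / 4)) ^ 2 := by
    calc x ^ 2 / 2 = (x * (√2 / 2)) ^ 2 := by rw [mul_pow, div_pow, sq_sqrt zero_le_two]; ring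
      _ ≤ _ := pow_le_pow_left₀ (by positivity) hchord 2
  linarith

end Real

theorem sec_becker_stark (x : ℝ) (h1 : -1 < x) (h2 : x < 1) :
    1 / (1 - x ^ 2) ≤ 1 / Real.cos (π * x / 2) ∧
    1 / Real.cos (π * x / 2) ≤ (4 / π) / (1 - x ^ 2) := by
  have hx : |x| ≤ 1 := (abs_lt.2 ⟨h1, h2⟩).le
  obtain ⟨hlow, hup⟩ : π / 4 * (1 - x ^ 2) ≤ cos (π * x / 2) ∧ cos (π * x / 2) ≤ 1 - x ^ 2 := by
    rw [← cos_pi_mul_abs_div_two, ← sq_abs x]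
    exact ⟨pi_div_four_mul_one_sub_sq_le_cos_pi_mul_div_two (abs_nonneg x) hx,
      cos_pi_mul_div_two_le_one_sub_sq (abs_nonneg x) hx⟩
  have hd : 0 < 1 - x ^ 2 := by nlinarith
  have hpos : 0 < π / 4 * (1 - x ^ 2) := by positivity
  refine ⟨one_div_le_one_div_of_le (hpos.trans_le hlow) hup, ?_⟩
  calc 1 / cos (π * x / 2) ≤ 1 / (π / 4 * (1 - x ^ 2)) := one_div_le_one_div_of_le hpos hlow
    _ = 4 / π / (1 - x ^ 2) := by field_simp
end

section
/- The function x ↦ (1 − x²)·sec(πx/2) is monotonically increasing on the interval [0, 1), and strictly increasing on (0, 1), where sec denotes the secant function 1/cos. -/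
/-!
Substituting `t = π x / 2`, the function is `(π² - 4t²) / (π² cos t)`, whose derivative has
the sign of `G t = (π² - 4t²) sin t - 8 t cos t`. Now `G 0 = G (π/2) = 0` and
`G' t = (π² - 8 - 4t²) cos t` changes sign exactly once on `(0, π/2)`, at `t = √(π² - 8) / 2`,
so `G` rises and then falls, and is therefore positive in between.
-/

open Real Set

lemma pos_of_strictMonoOn_of_strictAntiOn {f : ℝ → ℝ} {a b c t : ℝ}
    (hmono : StrictMonoOn f (Icc a c)) (hanti : StrictAntiOn f (Icc c b))
    (ha : f a = 0) (hb : f b = 0) (ht : t ∈ Ioo a b) : 0 < f t := by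
  rcases le_or_gt t c with htc | hct
  · simpa [ha] using hmono ⟨le_rfl, ht.1.le.trans htc⟩ ⟨ht.1.le, htc⟩ ht.1
  · simpa [hb] using hanti ⟨hct.le, ht.2.le⟩ ⟨hct.le.trans ht.2.le, le_rfl⟩ ht.2

lemma hasDerivAt_const_sub_four_mul_sq (a t : ℝ) :
    HasDerivAt (fun t : ℝ => a - 4 * t ^ 2) (-(8 * t)) t := by
  refine (((hasDerivAt_pow 2 t).const_mul 4).const_sub a).congr_deriv ?_
  ring

noncomputable def secProfile (t : ℝ) : ℝ := (π ^ 2 - 4 * t ^ 2) / cos t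

noncomputable def secProfileDerivNumerator (t : ℝ) : ℝ :=
  (π ^ 2 - 4 * t ^ 2) * sin t - 8 * t * cos t

lemma hasDerivAt_secProfile {t : ℝ} (ht : cos t ≠ 0) :
    HasDerivAt secProfile (secProfileDerivNumerator t / cos t ^ 2) t := by
  have hnum := hasDerivAt_const_sub_four_mul_sq (π ^ 2) t
  refine (hnum.div (hasDerivAt_cos t) ht).congr_deriv ?_
  simp only [secProfileDerivNumerator]
  ring

lemma hasDerivAt_secProfileDerivNumerator (t : ℝ) :
    HasDerivAt secProfileDerivNumerator ((π ^ 2 - 8 - 4 * t ^ 2) * cos t) t := by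
  have hnum := hasDerivAt_const_sub_four_mul_sq (π ^ 2) t
  have hlin : HasDerivAt (fun t : ℝ => 8 * t) 8 t := by
    simpa using (hasDerivAt_id t).const_mul 8
  refine ((hnum.mul (hasDerivAt_sin t)).sub (hlin.mul (hasDerivAt_cos t))).congr_deriv ?_
  ring

lemma secProfileDerivNumerator_pos {t : ℝ} (ht : t ∈ Ioo 0 (π / 2)) :
    0 < secProfileDerivNumerator t := by
  set c := √(π ^ 2 - 8) / 2
  have hπ8 : 8 < π ^ 2 := by nlinarith [pi_gt_three]
  have hc_sq : 4 * c ^ 2 = π ^ 2 - 8 := by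
    simp only [c, div_pow, sq_sqrt (sub_nonneg.2 hπ8.le)]; ring
  have hc_nonneg : 0 ≤ c := by positivity
  have hc_lt : c < π / 2 := by nlinarith [pi_pos]
  have hcont : Continuous secProfileDerivNumerator := by
    unfold secProfileDerivNumerator; fun_prop
  have hderiv (x : ℝ) : deriv secProfileDerivNumerator x = (π ^ 2 - 8 - 4 * x ^ 2) * cos x :=
    (hasDerivAt_secProfileDerivNumerator x).deriv
  have hmono : StrictMonoOn secProfileDerivNumerator (Icc 0 c) := by
    refine strictMonoOn_of_deriv_pos (convex_Icc 0 c) hcont.continuousOn fun x hx => ?_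
    rw [interior_Icc] at hx
    have hcos : 0 < cos x := cos_pos_of_mem_Ioo ⟨by linarith [pi_pos, hx.1], by linarith [hx.2]⟩
    rw [hderiv]
    exact mul_pos (by nlinarith [hx.1, hx.2]) hcos
  have hanti : StrictAntiOn secProfileDerivNumerator (Icc c (π / 2)) := by
    refine strictAntiOn_of_deriv_neg (convex_Icc c (π / 2)) hcont.continuousOn fun x hx => ?_
    rw [interior_Icc] at hx
    have hcos : 0 < cos x := cos_pos_of_mem_Ioo ⟨by linarith [pi_pos, hx.1], hx.2⟩
    rw [hderiv]
    exact mul_neg_of_neg_of_pos (by nlinarith [hx.1, hx.2]) hcos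
  refine pos_of_strictMonoOn_of_strictAntiOn hmono hanti ?_ ?_ ht
  · simp [secProfileDerivNumerator]
  · simp only [secProfileDerivNumerator, sin_pi_div_two, cos_pi_div_two]; ring

lemma strictMonoOn_secProfile : StrictMonoOn secProfile (Ico 0 (π / 2)) := by
  have hcos {t : ℝ} (ht : t ∈ Ico 0 (π / 2)) : 0 < cos t :=
    cos_pos_of_mem_Ioo ⟨by linarith [pi_pos, ht.1], ht.2⟩
  refine strictMonoOn_of_deriv_pos (convex_Ico 0 (π / 2)) ?_ fun t ht => ?_
  · exact fun t ht => (hasDerivAt_secProfile (hcos ht).ne').continuousAt.continuousWithinAt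
  · rw [interior_Ico] at ht
    rw [(hasDerivAt_secProfile (hcos (Ioo_subset_Ico_self ht)).ne').deriv]
    exact div_pos (secProfileDerivNumerator_pos ht) (pow_pos (hcos (Ioo_subset_Ico_self ht)) 2)

theorem sec_monotone :
    MonotoneOn (fun x : ℝ => (1 - x ^ 2) * (1 / Real.cos (π * x / 2))) (Set.Ico 0 1) ∧
    StrictMonoOn (fun x : ℝ => (1 - x ^ 2) * (1 / Real.cos (π * x / 2))) (Set.Ioo 0 1) := by
  set f := fun x : ℝ => (1 - x ^ 2) * (1 / Real.cos (π * x / 2))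
  have hsubst : f = (fun s => s / π ^ 2) ∘ secProfile ∘ (fun x => π * x / 2) := by
    ext x
    simp only [f, Function.comp, secProfile]
    field_simp [pi_ne_zero]
    ring
  have hscale : StrictMono fun x : ℝ => π * x / 2 := fun x y h => by nlinarith [pi_pos]
  have hmaps : MapsTo (fun x : ℝ => π * x / 2) (Ico 0 1) (Ico 0 (π / 2)) :=
    fun x hx => ⟨by nlinarith [pi_pos, hx.1], by nlinarith [pi_pos, hx.2]⟩
  have hstrict : StrictMonoOn f (Ico 0 1) := by
    rw [hsubst]
    exact (strictMono_div_right_of_pos (pow_pos pi_pos 2)).comp_strictMonoOn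
      (strictMonoOn_secProfile.comp (hscale.strictMonoOn _) hmaps)
  exact ⟨hstrict.monotoneOn, hstrict.mono Ioo_subset_Ico_self⟩
end
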